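/- arXiv:2511.04465 — 6 statements merged into one kernel-verified Lean document; each statement's English description precedes it below -/
import Mathlib

section
/- The rule UserProp is not Pigou-Dalton consistent: for every α ∈ (0,1] there exist instances I = (N, C, w) and I' = (N, C, w') satisfying the hypotheses of Pigou-Dalton consistency for some artist j but with φ_I(j) > φ_{I'}(j) under UserProp. -/
open Finset

/-- An instance `I = (N, C, w)`: a finite nonempty set of users `N`, a finite set of
artists `C`, and nonnegative real engagement weights `w i j` (supported on
`users × artists`), such that every user has positive total engagement. -/
structure Inst where
  users : Finset ℕ
  artists : Finset ℕ
  w : ℕ → ℕ → ℝ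
  users_nonempty : users.Nonempty
  w_nonneg : ∀ i j, 0 ≤ w i j
  w_supp : ∀ i j, w i j ≠ 0 → i ∈ users ∧ j ∈ artists
  w_pos : ∀ i ∈ users, 0 < ∑ j ∈ artists, w i j

/-- `φ` is a payment rule (with revenue share `α`) on the class of instances satisfying `P`:
payments to artists are nonnegative and total `α·|N|`. -/
def IsRuleOn (P : Inst → Prop) (α : ℝ) (φ : Inst → ℕ → ℝ) : Prop :=
  ∀ I : Inst, P I →
    (∀ j ∈ I.artists, 0 ≤ φ I j) ∧ (∑ j ∈ I.artists, φ I j) = α * I.users.card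

/-- `φ` is a payment rule (with revenue share `α`). -/
abbrev IsRule (α : ℝ) (φ : Inst → ℕ → ℝ) : Prop := IsRuleOn (fun _ => True) α φ

/-- Fraud-proofness, relative to a class `P` of instances: for instances
`I = (N \ N̂, C, w)` and `I' = (N, C, w')` agreeing on the genuine users `N \ N̂`,
and any coalition `Ĉ ⊆ C`, the gain `φ_{I'}(Ĉ) − φ_I(Ĉ)` is at most `|N̂|`. -/
def FraudProofOn (P : Inst → Prop) (φ : Inst → ℕ → ℝ) : Prop :=
  ∀ I I' : Inst, P I → P I' →
    ∀ Nhat : Finset ℕ, Nhat ⊆ I'.users → I.users = I'.users \ Nhat →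
      I.artists = I'.artists →
      (∀ i ∈ I.users, ∀ j ∈ I.artists, I.w i j = I'.w i j) →
      ∀ Chat ⊆ I.artists,
        (∑ j ∈ Chat, φ I' j) - (∑ j ∈ Chat, φ I j) ≤ (Nhat.card : ℝ)

/-- Fraud-proofness. -/
abbrev FraudProof (φ : Inst → ℕ → ℝ) : Prop := FraudProofOn (fun _ => True) φ

/-- Single-user fraud-proofness: fraud-proofness restricted to `|N̂| = 1`. -/
def SingleFraudProof (φ : Inst → ℕ → ℝ) : Prop :=
  ∀ I I' : Inst,
    ∀ Nhat : Finset ℕ, Nhat.card = 1 → Nhat ⊆ I'.users → I.users = I'.users \ Nhat →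
      I.artists = I'.artists →
      (∀ i ∈ I.users, ∀ j ∈ I.artists, I.w i j = I'.w i j) →
      ∀ Chat ⊆ I.artists,
        (∑ j ∈ Chat, φ I' j) - (∑ j ∈ Chat, φ I j) ≤ 1

open Classical in
/-- The number of users whose engagement vectors differ between two instances
(on the same user and artist sets). -/
noncomputable def bribedCount (I I' : Inst) : ℕ :=
  (I.users.filter (fun i => ∃ j ∈ I.artists, I.w i j ≠ I'.w i j)).card

/-- Bribery-proofness, relative to a class `P` of instances: for instances `I, I'` on the
same users and artists whose engagement vectors differ for exactly `k` users, and any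
coalition `Ĉ ⊆ C`, the gain `φ_{I'}(Ĉ) − φ_I(Ĉ)` is at most `k`. -/
def BriberyProofOn (P : Inst → Prop) (φ : Inst → ℕ → ℝ) : Prop :=
  ∀ I I' : Inst, P I → P I' →
    I.users = I'.users → I.artists = I'.artists →
    ∀ Chat ⊆ I.artists,
      (∑ j ∈ Chat, φ I' j) - (∑ j ∈ Chat, φ I j) ≤ (bribedCount I I' : ℝ)

/-- Bribery-proofness. -/
abbrev BriberyProof (φ : Inst → ℕ → ℝ) : Prop := BriberyProofOn (fun _ => True) φ

/-- Single-user bribery-proofness: bribery-proofness restricted to `k = 1`. -/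
def SingleBriberyProof (φ : Inst → ℕ → ℝ) : Prop :=
  ∀ I I' : Inst,
    I.users = I'.users → I.artists = I'.artists →
    bribedCount I I' = 1 →
    ∀ Chat ⊆ I.artists,
      (∑ j ∈ Chat, φ I' j) - (∑ j ∈ Chat, φ I j) ≤ 1

/-- Anonymity (relative to a class `P`): permuting the labels of the users does not
affect the payoffs of the artists. -/
def AnonymousOn (P : Inst → Prop) (φ : Inst → ℕ → ℝ) : Prop :=
  ∀ I I' : Inst, P I → P I' →
    I.users = I'.users → I.artists = I'.artists →
    ∀ σ : Equiv.Perm ℕ, (∀ i ∈ I.users, σ i ∈ I.users) →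
      (∀ i ∈ I.users, ∀ j ∈ I.artists, I.w i j = I'.w (σ i) j) →
      ∀ j ∈ I.artists, φ I j = φ I' j

/-- Neutrality (relative to a class `P`): permuting the labels of the artists permutes
their payoffs. -/
def NeutralOn (P : Inst → Prop) (φ : Inst → ℕ → ℝ) : Prop :=
  ∀ I I' : Inst, P I → P I' →
    I.users = I'.users → I.artists = I'.artists →
    ∀ σ : Equiv.Perm ℕ, (∀ j ∈ I.artists, σ j ∈ I.artists) →
      (∀ i ∈ I.users, ∀ j ∈ I.artists, I.w i j = I'.w i (σ j)) →
      ∀ j ∈ I.artists, φ I j = φ I' (σ j)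

/-- Neutrality. -/
abbrev Neutral (φ : Inst → ℕ → ℝ) : Prop := NeutralOn (fun _ => True) φ

/-- No free-ridership (relative to a class `P`): an artist with zero total engagement
receives zero payment. -/
def NoFreeRideOn (P : Inst → Prop) (φ : Inst → ℕ → ℝ) : Prop :=
  ∀ I : Inst, P I → ∀ j ∈ I.artists, (∑ i ∈ I.users, I.w i j) = 0 → φ I j = 0

/-- Sybil-proofness: artists outside `C*` cannot change their combined payoff by
splitting/merging (user-by-user engagement towards `C*` and user totals outside `C*`
are preserved). -/
def SybilProof (φ : Inst → ℕ → ℝ) : Prop :=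
  ∀ I I' : Inst, I.users = I'.users → I.artists ⊆ I'.artists →
    ∀ Cstar ⊆ I.artists,
      (∀ i ∈ I.users, ∀ j ∈ Cstar, I.w i j = I'.w i j) →
      (∀ i ∈ I.users, ∑ j ∈ I.artists \ Cstar, I.w i j = ∑ j ∈ I'.artists \ Cstar, I'.w i j) →
      ∑ j ∈ I.artists \ Cstar, φ I j = ∑ j ∈ I'.artists \ Cstar, φ I' j

/-- Strong Sybil-proofness: as Sybil-proofness, but only total engagements
(aggregated over users) are preserved. -/
def StrongSybilProof (φ : Inst → ℕ → ℝ) : Prop :=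
  ∀ I I' : Inst, I.users = I'.users → I.artists ⊆ I'.artists →
    ∀ Cstar ⊆ I.artists,
      (∀ j ∈ Cstar, ∑ i ∈ I.users, I.w i j = ∑ i ∈ I'.users, I'.w i j) →
      (∑ i ∈ I.users, ∑ j ∈ I.artists \ Cstar, I.w i j
        = ∑ i ∈ I'.users, ∑ j ∈ I'.artists \ Cstar, I'.w i j) →
      ∑ j ∈ I.artists \ Cstar, φ I j = ∑ j ∈ I'.artists \ Cstar, φ I' j

/-- Engagement monotonicity: if artist `j*`'s engagement weakly increases while every
other artist's engagement weakly decreases, then `j*`'s payoff does not decrease. -/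
def EngagementMonotone (φ : Inst → ℕ → ℝ) : Prop :=
  ∀ I I' : Inst, I.users = I'.users → I.artists = I'.artists →
    ∀ jstar ∈ I.artists,
      (∀ i ∈ I.users, I.w i jstar ≤ I'.w i jstar) →
      (∀ i ∈ I.users, ∀ j ∈ I.artists, j ≠ jstar → I'.w i j ≤ I.w i j) →
      φ I jstar ≤ φ I' jstar

/-- Pigou-Dalton consistency: transferring `δ > 0` of engagement with artist `j` from a
user `i` with more engagement to a user `i'` with less (keeping everything else fixed,
and not overshooting) does not decrease `j`'s payoff. -/
def PigouDalton (φ : Inst → ℕ → ℝ) : Prop :=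
  ∀ I I' : Inst, I.users = I'.users → I.artists = I'.artists →
    ∀ i ∈ I.users, ∀ i' ∈ I.users, i ≠ i' →
      ∀ j ∈ I.artists, ∀ δ : ℝ,
        0 < δ → 0 < I.w i j - δ →
        I'.w i j = I.w i j - δ →
        I'.w i' j = I.w i' j + δ →
        I'.w i' j ≤ I'.w i j →
        (∀ k ∈ I.users, ∀ j' ∈ I.artists, j' ≠ j → I.w k j' = I'.w k j') →
        (∀ k ∈ I.users, k ≠ i → k ≠ i' → I.w k j = I'.w k j) →
        φ I j ≤ φ I' j

/-- User-addition monotonicity: adding one new user (with an arbitrary engagement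
vector) does not decrease any artist's payoff. -/
def UserAdditionMonotone (φ : Inst → ℕ → ℝ) : Prop :=
  ∀ I I' : Inst, I.artists = I'.artists →
    ∀ i₀ : ℕ, i₀ ∉ I.users → I'.users = insert i₀ I.users →
      (∀ i ∈ I.users, ∀ j ∈ I.artists, I.w i j = I'.w i j) →
      ∀ j ∈ I.artists, φ I j ≤ φ I' j

/-- The single-user instance `I_i = ({i}, C, w_i)` extracted from an instance `I`. -/
def Inst.single (I : Inst) (i : ℕ) (hi : i ∈ I.users) : Inst where
  users := {i}
  artists := I.artists
  w := fun i' j => if i' = i then I.w i j else 0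
  users_nonempty := Finset.singleton_nonempty i
  w_nonneg := by
    intro i' j
    try dsimp only
    split
    · exact I.w_nonneg i j
    · exact le_refl 0
  w_supp := by
    intro i' j h
    try dsimp only at h
    split at h
    · rename_i hii
      exact ⟨by simp [hii], (I.w_supp i j h).2⟩
    · exact absurd rfl h
  w_pos := by
    intro i' hi'
    have h : i' = i := Finset.mem_singleton.mp hi'
    simpa [h] using I.w_pos i hi

/-- User-additivity: each artist's payoff is the sum of the payoffs they would obtain in
the single-user instances. -/
def UserAdditive (φ : Inst → ℕ → ℝ) : Prop :=
  ∀ I : Inst, ∀ j ∈ I.artists,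
    φ I j = ∑ i ∈ I.users.attach, φ (I.single i.1 i.2) j

/-- The `GlobalProp` rule: artists are paid proportionally to their share of total
engagement on the platform. -/
noncomputable def globalProp (α : ℝ) (I : Inst) (j : ℕ) : ℝ :=
  α * I.users.card * (∑ i ∈ I.users, I.w i j) /
    (∑ i ∈ I.users, ∑ j' ∈ I.artists, I.w i j')

/-- The `UserProp` rule: an `α` fraction of each user's fee is split proportionally to
that user's engagement. -/
noncomputable def userProp (α : ℝ) (I : Inst) (j : ℕ) : ℝ :=
  α * ∑ i ∈ I.users, (I.w i j / ∑ j' ∈ I.artists, I.w i j')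

open Classical in
/-- The `UserEQ` rule: an `α` fraction of each user's fee is split equally among the
artists with which the user has positive engagement. -/
noncomputable def userEQ (α : ℝ) (I : Inst) (j : ℕ) : ℝ :=
  α * ∑ i ∈ I.users,
    ((if 0 < I.w i j then (1 : ℝ) else 0) /
      ((I.artists.filter (fun j' => 0 < I.w i j')).card : ℝ))

/-- The `ScaledUserProp` rule, given a choice `γ I` of the scaling parameter for each
instance: user `i` contributes `min(γ·‖w_i‖₁, 1)`, split proportionally to `w_i`. -/
noncomputable def scaledUserProp (γ : Inst → ℝ) (I : Inst) (j : ℕ) : ℝ :=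
  ∑ i ∈ I.users,
    (min (γ I * ∑ j' ∈ I.artists, I.w i j') 1 * (I.w i j / ∑ j' ∈ I.artists, I.w i j'))

/-! Under `UserProp` user `i` pays artist `j` the share `w i j / ‖w i‖₁`. Moving engagement
with `j` from a user with a small total to a user with a large total lowers the first share
by more than it raises the second: with rows `(3, 1)` and `(1, 100)` and `δ = 1`, artist `0`
gets `α (3/4 + 1/101)` before and only `α (2/3 + 1/51)` after the transfer. -/

def twoByTwoWeight (a b c d : ℝ) : ℕ → ℕ → ℝ
  | 0, 0 => a
  | 0, 1 => b
  | 1, 0 => c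
  | 1, 1 => d
  | _, _ => 0

def twoByTwo (a b c d : ℝ) (ha : 0 < a) (hb : 0 ≤ b) (hc : 0 ≤ c) (hd : 0 < d) : Inst where
  users := {0, 1}
  artists := {0, 1}
  w := twoByTwoWeight a b c d
  users_nonempty := insert_nonempty 0 {1}
  w_nonneg
    | 0, 0 => ha.le
    | 0, 1 => hb
    | 1, 0 => hc
    | 1, 1 => hd.le
    | 0, _ + 2 | 1, _ + 2 | _ + 2, _ => le_rfl
  w_supp
    | 0, 0, _ | 0, 1, _ | 1, 0, _ | 1, 1, _ => by simp
    | 0, _ + 2, h | 1, _ + 2, h | _ + 2, _, h => absurd rfl h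
  w_pos := by
    intro i hi
    rcases mem_insert.mp hi with rfl | hi
    · simp only [sum_pair zero_ne_one, twoByTwoWeight]
      linarith
    · simp only [mem_singleton.mp hi, sum_pair zero_ne_one, twoByTwoWeight]
      linarith

theorem userProp_twoByTwo_zero (α a b c d : ℝ) (ha : 0 < a) (hb : 0 ≤ b) (hc : 0 ≤ c)
    (hd : 0 < d) :
    userProp α (twoByTwo a b c d ha hb hc hd) 0 = α * (a / (a + b) + c / (c + d)) := by
  simp only [userProp, twoByTwo, sum_pair zero_ne_one, twoByTwoWeight]

theorem PigouDalton.twoByTwo_transfer {φ : Inst → ℕ → ℝ} (hφ : PigouDalton φ)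
    {a b c d δ : ℝ} (ha : 0 < a) (hb : 0 ≤ b) (hc : 0 ≤ c) (hd : 0 < d) (hδ : 0 < δ)
    (hδa : 0 < a - δ) (hle : c + δ ≤ a - δ) :
    φ (twoByTwo a b c d ha hb hc hd) 0 ≤
      φ (twoByTwo (a - δ) b (c + δ) d hδa hb (by linarith) hd) 0 := by
  refine hφ (twoByTwo a b c d ha hb hc hd) (twoByTwo (a - δ) b (c + δ) d hδa hb _ hd) rfl rfl
    0 (by simp [twoByTwo]) 1 (by simp [twoByTwo]) zero_ne_one 0 (by simp [twoByTwo])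
    δ hδ hδa rfl rfl hle ?_ ?_
  · intro k hk j' hj' hj'0
    simp only [twoByTwo, mem_insert, mem_singleton] at hk hj'
    rcases hk with rfl | rfl <;> rcases hj' with rfl | rfl <;> trivial
  · intro k hk hk0 hk1
    simp only [twoByTwo, mem_insert, mem_singleton] at hk
    omega

theorem stmt14 (α : ℝ) (hα : α ∈ Set.Ioc (0 : ℝ) 1) :
    ¬ PigouDalton (userProp α) := by
  intro hpd
  have htransfer := hpd.twoByTwo_transfer (a := 3) (b := 1) (c := 1) (d := 100) (δ := 1)
    (by norm_num) zero_le_one zero_le_one (by norm_num) one_pos (by norm_num) (by norm_num)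
  rw [userProp_twoByTwo_zero, userProp_twoByTwo_zero] at htransfer
  norm_num at htransfer
  linarith [hα.1]
end

section
/- The rule UserEQ is not Sybil-proof: there exist instances I = (N, C, w) and I' = (N, C', w') with C ⊆ C' and a subset C* ⊆ C satisfying the hypotheses of Sybil-proofness but with φ_I(C\C*) ≠ φ_{I'}(C'\C*) under UserEQ. -/
open Finset

/-! A single user engaged with artists `0` and `1` makes UserEQ pay `α / 2` to artist `1`. If
artist `1` splits its engagement evenly over two Sybil identities, the user engages with three
artists, each identity receives `α / 3`, and the coalition outside `C* = {0}` gains `α / 6`. -/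

noncomputable def Inst.oneUser (C : Finset ℕ) (hC : C.Nonempty) (v : ℕ → ℝ)
    (hv : ∀ j ∈ C, 0 < v j) : Inst where
  users := {0}
  artists := C
  w i j := if i = 0 ∧ j ∈ C then v j else 0
  users_nonempty := singleton_nonempty 0
  w_nonneg i j := by
    split_ifs with h
    exacts [(hv j h.2).le, le_rfl]
  w_supp i j h := by
    split_ifs at h with hij
    · exact ⟨mem_singleton.mpr hij.1, hij.2⟩
    · exact absurd rfl h
  w_pos i hi := by
    rw [mem_singleton.mp hi]
    calc (0 : ℝ) < ∑ j ∈ C, v j := sum_pos hv hC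
      _ = _ := sum_congr rfl fun j hj => by simp [hj]

namespace Inst.oneUser

variable {C : Finset ℕ} {hC : C.Nonempty} {v : ℕ → ℝ} {hv : ∀ j ∈ C, 0 < v j}

@[simp]
theorem users_eq : (oneUser C hC v hv).users = {0} := rfl

@[simp]
theorem artists_eq : (oneUser C hC v hv).artists = C := rfl

theorem w_zero_of_mem {j : ℕ} (hj : j ∈ C) : (oneUser C hC v hv).w 0 j = v j := by
  simp [oneUser, hj]

theorem sum_w_zero {S : Finset ℕ} (hS : S ⊆ C) :
    ∑ j ∈ S, (oneUser C hC v hv).w 0 j = ∑ j ∈ S, v j :=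
  sum_congr rfl fun _ hj => w_zero_of_mem (hS hj)

theorem userEQ_of_mem (α : ℝ) {j : ℕ} (hj : j ∈ C) :
    userEQ α (oneUser C hC v hv) j = α / C.card := by
  have hengaged : C.filter (fun j' => 0 < (oneUser C hC v hv).w 0 j') = C :=
    filter_true_of_mem fun j' hj' => (w_zero_of_mem hj').symm ▸ hv j' hj'
  simp only [userEQ, users_eq, artists_eq, sum_singleton, hengaged, w_zero_of_mem hj, hv j hj,
    if_true]
  ring

theorem sum_userEQ (α : ℝ) {S : Finset ℕ} (hS : S ⊆ C) :
    ∑ j ∈ S, userEQ α (oneUser C hC v hv) j = α * S.card / C.card := by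
  rw [sum_congr rfl fun j hj => userEQ_of_mem α (hS hj), sum_const, nsmul_eq_mul]
  ring

end Inst.oneUser

open Inst.oneUser

noncomputable def sybilBefore : Inst :=
  Inst.oneUser {0, 1} (insert_nonempty _ _) (fun _ => 1) fun _ _ => one_pos

noncomputable def sybilAfter : Inst :=
  Inst.oneUser {0, 1, 2} (insert_nonempty _ _) (fun j => if j = 0 then 1 else 1 / 2)
    fun j _ => by split_ifs <;> norm_num

theorem stmt15 (α : ℝ) (hα : α ∈ Set.Ioc (0 : ℝ) 1) :
    ¬ SybilProof (userEQ α) := by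
  intro hsybil
  have hrest : ({0, 1} : Finset ℕ) \ {0} = {1} := by decide
  have hrest' : ({0, 1, 2} : Finset ℕ) \ {0} = {1, 2} := by decide
  have hsplit := hsybil sybilBefore sybilAfter rfl (by decide) {0} (by decide)
    (fun i hi j hj => by
      rw [mem_singleton.mp hi, mem_singleton.mp hj, sybilBefore, sybilAfter,
        w_zero_of_mem (by simp), w_zero_of_mem (by simp), if_pos rfl])
    (fun i hi => by
      rw [mem_singleton.mp hi, sybilBefore, sybilAfter, artists_eq, artists_eq,
        sum_w_zero sdiff_subset, sum_w_zero sdiff_subset, hrest, hrest']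
      norm_num)
  rw [sybilBefore, sybilAfter, artists_eq, artists_eq, sum_userEQ α sdiff_subset,
    sum_userEQ α sdiff_subset, hrest, hrest'] at hsplit
  norm_num at hsplit
  linarith [hα.1]
end

section
/- The rule UserEQ is Pigou-Dalton consistent. -/
open Finset

section UserEQShare

variable {ι : Type*} (C : Finset ι)

open Classical in
noncomputable def userEQShare (v : ι → ℝ) (j : ι) : ℝ :=
  (if 0 < v j then (1 : ℝ) else 0) / ((C.filter (fun j' => 0 < v j')).card : ℝ)

variable {C}

lemma userEQShare_nonneg (v : ι → ℝ) (j : ι) : 0 ≤ userEQShare C v j := by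
  unfold userEQShare
  positivity

/-- Either `j` had positive weight, and then the support is unchanged, or its share was `0`. -/
lemma userEQShare_le {v v' : ι → ℝ} {j : ι} (hothers : ∀ j' ∈ C, j' ≠ j → v j' = v' j')
    (hpos : 0 < v j → 0 < v' j) : userEQShare C v j ≤ userEQShare C v' j := by
  by_cases hj : 0 < v j
  · have hsupp : C.filter (fun j' => 0 < v j') = C.filter (fun j' => 0 < v' j') :=
      filter_congr fun j' hj' => by
        rcases eq_or_ne j' j with rfl | hne
        · exact iff_of_true hj (hpos hj)
        · rw [hothers j' hj' hne]
    rw [userEQShare, userEQShare, hsupp, if_pos hj, if_pos (hpos hj)]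
  · rw [userEQShare, if_neg hj, zero_div]
    exact userEQShare_nonneg v' j

end UserEQShare

lemma userEQ_eq_sum_userEQShare (α : ℝ) (I : Inst) (j : ℕ) :
    userEQ α I j = α * ∑ i ∈ I.users, userEQShare I.artists (I.w i) j :=
  rfl

theorem stmt16 (α : ℝ) (hα : α ∈ Set.Ioc (0 : ℝ) 1) :
    PigouDalton (userEQ α) := by
  intro I I' hu ha i _ i' _ _ j _ δ hδ hpos hwi hwi' _ hfix hfix'
  rw [userEQ_eq_sum_userEQShare, userEQ_eq_sum_userEQShare, ← hu, ← ha]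
  refine mul_le_mul_of_nonneg_left (sum_le_sum fun k hk => ?_) hα.1.le
  refine userEQShare_le (hfix k hk) fun hk_pos => ?_
  by_cases hki : k = i
  · rw [hki, hwi]
    exact hpos
  by_cases hki' : k = i'
  · subst hki'
    rw [hwi']
    linarith
  rwa [← hfix' k hk hki hki']
end

section
/- For every α ∈ (0,1] and every payment rule φ, if there exists a real number k such that for every instance I in which every artist has positive total engagement, max_{j∈C} PPS(φ, I, j) ≤ k · min_{j'∈C} PPS(φ, I, j'), then φ is not fraud-proof and not bribery-proof. -/
open Finset

/-! Under a bounded PPS ratio an artist's payment is squeezed by its share of the streams: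
an artist with a tiny share is paid almost nothing, one with an overwhelming share almost
everything. Let `n` honest users stream one unit of artist `0` and a tiny amount of artist `1`,
so that artist `1` receives at most `α / 4`. One extra user, fake or bribed, who streams
artist `1` heavily moves at least half of the `α (n + 1)` to artist `1`: a gain above `1`
once `α n ≥ 3`. -/

def Inst.engagement (I : Inst) (j : ℕ) : ℝ := ∑ i ∈ I.users, I.w i j

def BoundedPPSRatio (φ : Inst → ℕ → ℝ) (k : ℝ) : Prop :=
  ∀ I : Inst, (∀ j ∈ I.artists, 0 < I.engagement j) →
    ∀ j ∈ I.artists, ∀ j' ∈ I.artists, φ I j / I.engagement j ≤ k * (φ I j' / I.engagement j')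

section PaymentBounds

variable {α k : ℝ} {φ : Inst → ℕ → ℝ}

lemma BoundedPPSRatio.mono {k' : ℝ} (hφ : IsRule α φ) (hk : BoundedPPSRatio φ k)
    (hkk' : k ≤ k') : BoundedPPSRatio φ k' := by
  intro I hI j hj j' hj'
  have hpps : 0 ≤ φ I j' / I.engagement j' := div_nonneg ((hφ I trivial).1 j' hj') (hI j' hj').le
  exact (hk I hI j hj j' hj').trans (mul_le_mul_of_nonneg_right hkk' hpps)

lemma IsRule.pay_le_total (hφ : IsRule α φ) (I : Inst) {j : ℕ} (hj : j ∈ I.artists) :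
    φ I j ≤ α * I.users.card := by
  obtain ⟨hnonneg, hsum⟩ := hφ I trivial
  exact hsum ▸ single_le_sum hnonneg hj

lemma IsRule.le_of_boundedPPSRatio (hφ : IsRule α φ) (hk : BoundedPPSRatio φ k) (hk0 : 0 ≤ k)
    {I : Inst} (hI : ∀ j ∈ I.artists, 0 < I.engagement j) {j j' : ℕ}
    (hj : j ∈ I.artists) (hj' : j' ∈ I.artists) :
    φ I j ≤ k * (I.engagement j / I.engagement j') * (α * I.users.card) := by
  have hpos := hI j hj
  have hpos' := hI j' hj'
  calc φ I j = I.engagement j * (φ I j / I.engagement j) := by field_simp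
    _ ≤ I.engagement j * (k * (φ I j' / I.engagement j')) :=
        mul_le_mul_of_nonneg_left (hk I hI j hj j' hj') hpos.le
    _ = k * (I.engagement j / I.engagement j') * φ I j' := by ring
    _ ≤ k * (I.engagement j / I.engagement j') * (α * I.users.card) :=
        mul_le_mul_of_nonneg_left (hφ.pay_le_total I hj') (by positivity)

lemma IsRule.ge_of_boundedPPSRatio (hφ : IsRule α φ) (hk : BoundedPPSRatio φ k) (hk0 : 0 ≤ k)
    {I : Inst} (hI : ∀ j ∈ I.artists, 0 < I.engagement j) {j j' : ℕ}
    (hartists : I.artists = {j', j}) (hne : j' ≠ j) :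
    α * I.users.card * (1 - k * (I.engagement j' / I.engagement j)) ≤ φ I j := by
  have hsum := (hφ I trivial).2
  rw [hartists, sum_pair hne] at hsum
  have hle := hφ.le_of_boundedPPSRatio hk hk0 hI (j := j') (j' := j)
    (by simp [hartists]) (by simp [hartists])
  linear_combination hle - hsum

end PaymentBounds

section TwoArtistInstances

def twoArtistInst (U : Finset ℕ) (hU : U.Nonempty) (a b : ℕ → ℝ) (ha : ∀ i, 0 ≤ a i)
    (hb : ∀ i, 0 ≤ b i) (hab : ∀ i, 0 < a i + b i) : Inst where
  users := U
  artists := {0, 1}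
  w i j := if i ∈ U then (if j = 0 then a i else if j = 1 then b i else 0) else 0
  users_nonempty := hU
  w_nonneg i j := by split_ifs <;> simp [ha, hb]
  w_supp i j h := by split_ifs at h with hi h0 h1 <;> simp_all
  w_pos i hi := by simpa [sum_pair, hi] using hab i

variable {U : Finset ℕ} {hU : U.Nonempty} {a b : ℕ → ℝ} {ha : ∀ i, 0 ≤ a i}
  {hb : ∀ i, 0 ≤ b i} {hab : ∀ i, 0 < a i + b i}

@[simp] lemma twoArtistInst_users : (twoArtistInst U hU a b ha hb hab).users = U := rfl

@[simp] lemma twoArtistInst_artists : (twoArtistInst U hU a b ha hb hab).artists = {0, 1} := rfl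

lemma twoArtistInst_w_zero {i : ℕ} (hi : i ∈ U) :
    (twoArtistInst U hU a b ha hb hab).w i 0 = a i :=
  if_pos hi

lemma twoArtistInst_w_one {i : ℕ} (hi : i ∈ U) :
    (twoArtistInst U hU a b ha hb hab).w i 1 = b i := by
  simp [twoArtistInst, hi]

lemma twoArtistInst_engagement_zero :
    (twoArtistInst U hU a b ha hb hab).engagement 0 = ∑ i ∈ U, a i :=
  sum_congr rfl fun _ hi => twoArtistInst_w_zero hi

lemma twoArtistInst_engagement_one :
    (twoArtistInst U hU a b ha hb hab).engagement 1 = ∑ i ∈ U, b i :=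
  sum_congr rfl fun _ hi => twoArtistInst_w_one hi

lemma twoArtistInst_engagement_pos (h0 : 0 < (twoArtistInst U hU a b ha hb hab).engagement 0)
    (h1 : 0 < (twoArtistInst U hU a b ha hb hab).engagement 1) :
    ∀ j ∈ (twoArtistInst U hU a b ha hb hab).artists,
      0 < (twoArtistInst U hU a b ha hb hab).engagement j := by
  simpa using ⟨h0, h1⟩

end TwoArtistInstances

def honestInst (U : Finset ℕ) (hU : U.Nonempty) {ε : ℝ} (hε : 0 < ε) : Inst :=
  twoArtistInst U hU (fun _ => 1) (fun _ => ε) (fun _ => zero_le_one) (fun _ => hε.le)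
    (fun _ => by positivity)

def attackedInst (U : Finset ℕ) {ε W : ℝ} (hε : 0 < ε) (hW : 0 < W) : Inst :=
  twoArtistInst (insert 0 U) (insert_nonempty 0 U) (fun i => if i = 0 then 0 else 1)
    (fun i => if i = 0 then W else ε) (fun _ => by split_ifs <;> norm_num)
    (fun _ => by split_ifs <;> positivity) (fun _ => by split_ifs <;> positivity)

lemma honestInst_w_eq_attackedInst_w {U V : Finset ℕ} {hV : V.Nonempty} {ε W : ℝ} (hε : 0 < ε)
    (hW : 0 < W) {i : ℕ} (hiV : i ∈ V) (hiU : i ∈ U) (hi : i ≠ 0) (j : ℕ) :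
    (honestInst V hV hε).w i j = (attackedInst U hε hW).w i j := by
  simp [attackedInst, honestInst, twoArtistInst, hiU, hiV, hi]

section PaymentsOnTwoArtistInstances

variable {α k : ℝ} {φ : Inst → ℕ → ℝ}

lemma honestInst_pay_one_le (hφ : IsRule α φ) (hk : BoundedPPSRatio φ k) (hk0 : 0 ≤ k)
    (U : Finset ℕ) (hU : U.Nonempty) {ε : ℝ} (hε : 0 < ε) :
    φ (honestInst U hU hε) 1 ≤ k * ε * (α * U.card) := by
  have hcard : (0 : ℝ) < U.card := by exact_mod_cast hU.card_pos
  have h0 : (honestInst U hU hε).engagement 0 = U.card := by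
    simp [honestInst, twoArtistInst_engagement_zero]
  have h1 : (honestInst U hU hε).engagement 1 = U.card * ε := by
    simp [honestInst, twoArtistInst_engagement_one, mul_comm]
  have hpos : ∀ j ∈ (honestInst U hU hε).artists, 0 < (honestInst U hU hε).engagement j :=
    twoArtistInst_engagement_pos (h0 ▸ hcard) (h1 ▸ by positivity)
  have := hφ.le_of_boundedPPSRatio hk hk0 hpos (j := 1) (j' := 0) (by simp [honestInst])
    (by simp [honestInst])
  rwa [h0, h1, mul_div_cancel_left₀ _ hcard.ne', honestInst, twoArtistInst_users] at this

lemma attackedInst_pay_one_ge (hφ : IsRule α φ) (hk : BoundedPPSRatio φ k) (hk0 : 0 ≤ k)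
    (hα : 0 ≤ α) {U : Finset ℕ} (hU : U.Nonempty) (h0U : 0 ∉ U) {ε W : ℝ} (hε : 0 < ε)
    (hW : 0 < W) :
    α * (U.card + 1) * (1 - k * U.card / W) ≤ φ (attackedInst U hε hW) 1 := by
  have hne : ∀ i ∈ U, i ≠ 0 := fun i hi h => h0U (h ▸ hi)
  have hcard : (0 : ℝ) < U.card := by exact_mod_cast hU.card_pos
  have h0 : (attackedInst U hε hW).engagement 0 = U.card := by
    rw [attackedInst, twoArtistInst_engagement_zero, sum_insert h0U, if_pos rfl, zero_add,
      sum_congr rfl fun i hi => if_neg (hne i hi)]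
    simp
  have h1 : (attackedInst U hε hW).engagement 1 = W + U.card * ε := by
    rw [attackedInst, twoArtistInst_engagement_one, sum_insert h0U, if_pos rfl,
      sum_congr rfl fun i hi => if_neg (hne i hi)]
    simp
  have hpos : ∀ j ∈ (attackedInst U hε hW).artists, 0 < (attackedInst U hε hW).engagement j :=
    twoArtistInst_engagement_pos (h0 ▸ hcard) (h1 ▸ by positivity)
  have hge := hφ.ge_of_boundedPPSRatio hk hk0 hpos (j := 1) (j' := 0) rfl zero_ne_one
  have hshare : k * (U.card / (W + U.card * ε)) ≤ k * U.card / W := by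
    rw [← mul_div_assoc]
    exact div_le_div_of_nonneg_left (by positivity) hW (by simp; positivity)
  have husers : ((attackedInst U hε hW).users.card : ℝ) = U.card + 1 := by
    simp [attackedInst, card_insert_of_notMem h0U]
  rw [h0, h1, husers] at hge
  refine le_trans ?_ hge
  gcongr

lemma one_lt_attackedInst_pay_sub_honestInst_pay (hφ : IsRule α φ) (hk : BoundedPPSRatio φ k)
    (hk0 : 0 ≤ k) {U V : Finset ℕ} (hU : U.Nonempty) (h0U : 0 ∉ U) (hV : V.Nonempty)
    (hVU : V.card ≤ U.card + 1) {ε W : ℝ} (hε : 0 < ε) (hW : 0 < W)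
    (hε_small : k * ε * (U.card + 1) ≤ 1 / 4) (hW_large : k * U.card / W ≤ 1 / 2)
    (hαU : 3 ≤ α * U.card) :
    1 < φ (attackedInst U hε hW) 1 - φ (honestInst V hV hε) 1 := by
  have hα : 0 ≤ α := by
    have : (0 : ℝ) < U.card := by exact_mod_cast hU.card_pos
    nlinarith
  have hhonest : φ (honestInst V hV hε) 1 ≤ α / 4 := calc
    φ (honestInst V hV hε) 1 ≤ k * ε * (α * V.card) := honestInst_pay_one_le hφ hk hk0 V hV hε
    _ ≤ k * ε * (α * (U.card + 1)) := by gcongr; exact_mod_cast hVU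
    _ = α * (k * ε * (U.card + 1)) := by ring
    _ ≤ α * (1 / 4) := by gcongr
    _ = α / 4 := by ring
  have hattacked : α * (U.card + 1) * (1 / 2) ≤ φ (attackedInst U hε hW) 1 := calc
    _ ≤ α * (U.card + 1) * (1 - k * U.card / W) := by gcongr; linarith
    _ ≤ φ (attackedInst U hε hW) 1 := attackedInst_pay_one_ge hφ hk hk0 hα hU h0U hε hW
  linarith

end PaymentsOnTwoArtistInstances

section Manipulation

variable {φ : Inst → ℕ → ℝ} {I I' : Inst} {i₀ j : ℕ}

lemma not_fraudProof_of_fake_user_gain (hi₀ : i₀ ∉ I.users)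
    (husers : I'.users = insert i₀ I.users)
    (hartists : I.artists = I'.artists) (hw : ∀ i ∈ I.users, ∀ j ∈ I.artists, I.w i j = I'.w i j)
    (hj : j ∈ I.artists) (hgain : 1 < φ I' j - φ I j) : ¬ FraudProof φ := by
  intro hφ
  have := hφ I I' trivial trivial {i₀} (by simp [husers])
    (by rw [husers, sdiff_singleton_eq_erase, erase_insert hi₀]) hartists hw {j}
    (singleton_subset_iff.2 hj)
  simp only [sum_singleton, card_singleton, Nat.cast_one] at this
  linarith

lemma bribedCount_le_one (hw : ∀ i ∈ I.users, i ≠ i₀ → ∀ j ∈ I.artists, I.w i j = I'.w i j) :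
    bribedCount I I' ≤ 1 := by
  refine (card_le_card (t := {i₀}) fun i hi => ?_).trans (card_singleton i₀).le
  obtain ⟨hiU, j, hj, hne⟩ := mem_filter.1 hi
  by_contra hii₀
  exact hne (hw i hiU (by simpa using hii₀) j hj)

lemma not_briberyProof_of_bribed_user_gain (husers : I.users = I'.users)
    (hartists : I.artists = I'.artists)
    (hw : ∀ i ∈ I.users, i ≠ i₀ → ∀ j ∈ I.artists, I.w i j = I'.w i j)
    (hj : j ∈ I.artists) (hgain : 1 < φ I' j - φ I j) : ¬ BriberyProof φ := by
  intro hφ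
  have := hφ I I' trivial trivial husers hartists {j} (singleton_subset_iff.2 hj)
  have hcount : (bribedCount I I' : ℝ) ≤ 1 := by exact_mod_cast bribedCount_le_one hw
  simp only [sum_singleton] at this
  linarith

end Manipulation

theorem stmt17 (α : ℝ) (hα : α ∈ Set.Ioc (0 : ℝ) 1)
    (φ : Inst → ℕ → ℝ) (hφ : IsRule α φ) (k : ℝ)
    (hk : ∀ I : Inst, (∀ j ∈ I.artists, 0 < ∑ i ∈ I.users, I.w i j) →
      ∀ j ∈ I.artists, ∀ j' ∈ I.artists,
        φ I j / (∑ i ∈ I.users, I.w i j) ≤ k * (φ I j' / (∑ i ∈ I.users, I.w i j'))) :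
    ¬ FraudProof φ ∧ ¬ BriberyProof φ := by
  obtain ⟨K, hK0, hK⟩ : ∃ K, 0 < K ∧ BoundedPPSRatio φ K :=
    ⟨max k 1, zero_lt_one.trans_le (le_max_right k 1),
      BoundedPPSRatio.mono hφ hk (le_max_left k 1)⟩
  obtain ⟨n, hn⟩ := exists_nat_ge (3 / α)
  have hαn : 3 ≤ α * n := by rwa [div_le_iff₀ hα.1, mul_comm] at hn
  have hn0 : (0 : ℝ) < n := pos_of_mul_pos_right (by linarith) hα.1.le
  set U := Icc 1 n
  have hU : U.Nonempty := nonempty_Icc.2 (by exact_mod_cast hn0)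
  have h0U : 0 ∉ U := by simp [U]
  have hcard : (U.card : ℝ) = n := by simp [U]
  have hε : 0 < 1 / (4 * K * (n + 1)) := by positivity
  have hW : 0 < 2 * K * n := by positivity
  have hgain (V : Finset ℕ) (hV : V.Nonempty) (hVU : V.card ≤ U.card + 1) :=
    one_lt_attackedInst_pay_sub_honestInst_pay hφ hK hK0.le hU h0U hV hVU hε hW
      (le_of_eq (by rw [hcard]; field_simp)) (le_of_eq (by rw [hcard]; field_simp)) (hcard ▸ hαn)
  have h1 : 1 ∈ ({0, 1} : Finset ℕ) := mem_insert_of_mem (mem_singleton_self 1)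
  constructor
  · exact not_fraudProof_of_fake_user_gain (I := honestInst U hU hε) (I' := attackedInst U hε hW)
      h0U rfl rfl
      (fun i hi j _ => honestInst_w_eq_attackedInst_w hε hW hi hi (ne_of_mem_of_not_mem hi h0U) j)
      h1 (hgain U hU (Nat.le_succ _))
  · exact not_briberyProof_of_bribed_user_gain
      (I := honestInst (insert 0 U) (insert_nonempty 0 U) hε) (I' := attackedInst U hε hW) rfl rfl
      (fun i hi hi0 j _ =>
        honestInst_w_eq_attackedInst_w hε hW hi ((mem_insert.1 hi).resolve_left hi0) hi0 j)
      h1 (hgain (insert 0 U) (insert_nonempty 0 U) (card_insert_le 0 U))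
end

section
/- Fix an instance I = (N, C, w) with |N| = n. If ∑_{j∈C} w_{ij} ≤ (1/(nα)) · ∑_{i'∈N} ∑_{j∈C} w_{i'j} for all i ∈ N, then the payment of ScaledUserProp to every artist equals the payment of GlobalProp to that artist, i.e., for all j ∈ C, ∑_{i∈N} min(γ·∑_{j'∈C} w_{ij'}, 1) · w_{ij}/(∑_{j'∈C} w_{ij'}) = α·n · (∑_{i∈N} w_{ij}) / (∑_{i∈N} ∑_{j'∈C} w_{ij'}), where γ > 0 satisfies ∑_{i∈N} min(γ·∑_{j∈C} w_{ij}, 1) = α·n. -/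
open Finset

/-! Write `s_i = ∑_j w_ij`, `S = ∑_i s_i` and `c = nα / S`, the rate at which GlobalProp
converts engagement into payment. The bound on `s_i` says exactly that `c s_i ≤ 1`. Since
`∑_i min(γ s_i, 1) = nα = c S ≤ γ S`, we get `c ≤ γ`, so `c s_i ≤ min(γ s_i, 1)` termwise;
both sides sum to `nα`, hence every user contributes exactly `c s_i`, and ScaledUserProp
pays artist `j` exactly `c ∑_i w_ij`. -/

theorem div_mul_le_one_of_le_one_div_mul {a S s : ℝ} (hs : 0 ≤ s) (h : s ≤ 1 / a * S) :
    a / S * s ≤ 1 := by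
  -- an identity in any field (with `0⁻¹ = 0`), so no sign condition on `a` or `S` is needed
  have hdiv : a / S = (1 / a * S)⁻¹ := by
    rw [mul_inv, one_div, inv_inv, div_eq_mul_inv, mul_comm]
  rw [hdiv, inv_mul_eq_div]
  exact div_le_one_of_le₀ h (hs.trans h)

theorem min_mul_one_eq_mul_of_sum_min_eq {ι : Type*} {t : Finset ι} {s : ι → ℝ} {γ c : ℝ}
    (hs : ∀ i ∈ t, 0 ≤ s i) (hcap : ∀ i ∈ t, c * s i ≤ 1)
    (hsum : ∑ i ∈ t, min (γ * s i) 1 = c * ∑ i ∈ t, s i) :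
    ∀ i ∈ t, min (γ * s i) 1 = c * s i := by
  have hle : ∀ i ∈ t, c * s i ≤ min (γ * s i) 1 := by
    intro i hi
    refine le_min ?_ (hcap i hi)
    rcases (hs i hi).eq_or_lt with hzero | hpos
    · simp [← hzero]
    have htotal : 0 < ∑ i ∈ t, s i := hpos.trans_le (single_le_sum hs hi)
    have hcγ : c ≤ γ := by
      refine le_of_mul_le_mul_right ?_ htotal
      calc c * ∑ i ∈ t, s i = ∑ i ∈ t, min (γ * s i) 1 := hsum.symm
        _ ≤ ∑ i ∈ t, γ * s i := sum_le_sum fun i _ => min_le_left _ _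
        _ = γ * ∑ i ∈ t, s i := (mul_sum _ _ _).symm
    exact mul_le_mul_of_nonneg_right hcγ hpos.le
  intro i hi
  refine ((sum_eq_sum_iff_of_le hle).mp ?_ i hi).symm
  rw [hsum, mul_sum]

theorem Inst.totalEngagement_pos (I : Inst) :
    0 < ∑ i ∈ I.users, ∑ j ∈ I.artists, I.w i j :=
  sum_pos I.w_pos I.users_nonempty

theorem stmt18_general (α : ℝ) (I : Inst)
    (γ : ℝ)
    (hγsum : ∑ i ∈ I.users, min (γ * ∑ j ∈ I.artists, I.w i j) 1 = α * I.users.card)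
    (hbound : ∀ i ∈ I.users,
      (∑ j ∈ I.artists, I.w i j) ≤
        (1 / ((I.users.card : ℝ) * α)) * ∑ i' ∈ I.users, ∑ j ∈ I.artists, I.w i' j) :
    ∀ j ∈ I.artists,
      (∑ i ∈ I.users,
        (min (γ * ∑ j' ∈ I.artists, I.w i j') 1 * (I.w i j / ∑ j' ∈ I.artists, I.w i j')))
      = α * I.users.card * (∑ i ∈ I.users, I.w i j) /
          (∑ i ∈ I.users, ∑ j' ∈ I.artists, I.w i j') := by
  intro j _
  set S := ∑ i ∈ I.users, ∑ j' ∈ I.artists, I.w i j'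
  set c := (I.users.card : ℝ) * α / S
  have hcontrib : ∀ i ∈ I.users,
      min (γ * ∑ j' ∈ I.artists, I.w i j') 1 = c * ∑ j' ∈ I.artists, I.w i j' := by
    refine min_mul_one_eq_mul_of_sum_min_eq (fun i hi => (I.w_pos i hi).le)
      (fun i hi => div_mul_le_one_of_le_one_div_mul (I.w_pos i hi).le (hbound i hi)) ?_
    rw [hγsum, div_mul_cancel₀ _ I.totalEngagement_pos.ne', mul_comm]
  calc _ = ∑ i ∈ I.users, c * I.w i j := sum_congr rfl fun i hi => by
          rw [hcontrib i hi, mul_assoc, mul_div_cancel₀ _ (I.w_pos i hi).ne']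
    _ = _ := by rw [← mul_sum]; ring

theorem stmt18 (α : ℝ) (hα : α ∈ Set.Ioc (0 : ℝ) 1) (I : Inst)
    (γ : ℝ) (hγ : 0 < γ)
    (hγsum : ∑ i ∈ I.users, min (γ * ∑ j ∈ I.artists, I.w i j) 1 = α * I.users.card)
    (hbound : ∀ i ∈ I.users,
      (∑ j ∈ I.artists, I.w i j) ≤
        (1 / ((I.users.card : ℝ) * α)) * ∑ i' ∈ I.users, ∑ j ∈ I.artists, I.w i' j) :
    ∀ j ∈ I.artists,
      (∑ i ∈ I.users,
        (min (γ * ∑ j' ∈ I.artists, I.w i j') 1 * (I.w i j / ∑ j' ∈ I.artists, I.w i j')))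
      = α * I.users.card * (∑ i ∈ I.users, I.w i j) /
          (∑ i ∈ I.users, ∑ j' ∈ I.artists, I.w i j') :=
  stmt18_general α I γ hγsum hbound
end

section
/- The rule ScaledUserProp is fraud-proof and bribery-proof. -/
open Finset

/-!
Write `m_i = min(γ‖w_i‖₁, 1) ∈ [0, 1]` for the budget of user `i` and `p_i ∈ [0, 1]` for the
fraction of `w_i` spent on the coalition `Ĉ`, so that `φ(Ĉ) = ∑ m_i p_i` and `∑ m_i = α|N|`.
A manipulation replaces the users `B` by `B'` (`B = ∅` for fraud, `B = B'` for bribery) and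
leaves the others, `A`, with the same `p_i`. As `γ` is chosen globally, the budgets on `A` all
move in the same direction. If they shrink, `Ĉ` gains at most what `B'` pays it, `≤ |B'|`.
If they grow, `Ĉ` gains at most the growth `α(|B'| - |B|)` of the total budget plus what `B`
used to spend outside `Ĉ`, `≤ |B|`; and `α ≤ 1`.
-/

section Gain

variable {ι : Type*} [DecidableEq ι] {A B B' : Finset ι} {m m' p p' : ι → ℝ}

theorem sum_mul_sub_sum_mul_le_card_of_le (hB : Disjoint A B) (hB' : Disjoint A B')
    (hmA : ∀ i ∈ A, m i ≤ m' i) (hpA : ∀ i ∈ A, p' i = p i ∧ p i ≤ 1)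
    (hB1 : ∀ i ∈ B, m i ≤ 1 ∧ p i ∈ Set.Icc 0 1) (hB'1 : ∀ i ∈ B', 0 ≤ m' i ∧ p' i ≤ 1)
    (hbudget : ∑ i ∈ A ∪ B', m' i - ∑ i ∈ A ∪ B, m i ≤ #B' - #B) :
    ∑ i ∈ A ∪ B', m' i * p' i - ∑ i ∈ A ∪ B, m i * p i ≤ #B' := by
  rw [sum_union hB, sum_union hB'] at hbudget ⊢
  have hA : ∑ i ∈ A, m' i * p' i - ∑ i ∈ A, m i * p i ≤ ∑ i ∈ A, m' i - ∑ i ∈ A, m i := by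
    rw [← sum_sub_distrib, ← sum_sub_distrib]
    refine sum_le_sum fun i hi => ?_
    obtain ⟨hpp, hp1⟩ := hpA i hi
    rw [hpp, ← sub_mul]
    exact mul_le_of_le_one_right (sub_nonneg.mpr (hmA i hi)) hp1
  have hB'le : ∑ i ∈ B', m' i * p' i ≤ ∑ i ∈ B', m' i :=
    sum_le_sum fun i hi => mul_le_of_le_one_right (hB'1 i hi).1 (hB'1 i hi).2
  have hBle : ∑ i ∈ B, m i - #B ≤ ∑ i ∈ B, m i * p i := by
    rw [← nsmul_one, ← sum_const, ← sum_sub_distrib]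
    refine sum_le_sum fun i hi => ?_
    obtain ⟨hm1, hp0, hp1⟩ := hB1 i hi
    nlinarith
  linarith

theorem sum_mul_sub_sum_mul_le_card_of_ge (hB : Disjoint A B) (hB' : Disjoint A B')
    (hmA : ∀ i ∈ A, m' i ≤ m i) (hpA : ∀ i ∈ A, p' i = p i ∧ 0 ≤ p i)
    (hB0 : ∀ i ∈ B, 0 ≤ m i ∧ 0 ≤ p i) (hB'1 : ∀ i ∈ B', m' i ∈ Set.Icc 0 1 ∧ p' i ≤ 1) :
    ∑ i ∈ A ∪ B', m' i * p' i - ∑ i ∈ A ∪ B, m i * p i ≤ #B' := by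
  rw [sum_union hB, sum_union hB']
  have hA : ∑ i ∈ A, m' i * p' i ≤ ∑ i ∈ A, m i * p i := by
    refine sum_le_sum fun i hi => ?_
    rw [(hpA i hi).1]
    exact mul_le_mul_of_nonneg_right (hmA i hi) (hpA i hi).2
  have hB'le : ∑ i ∈ B', m' i * p' i ≤ #B' := by
    rw [← nsmul_one, ← sum_const]
    refine sum_le_sum fun i hi => ?_
    obtain ⟨⟨hm0, hm1⟩, hp1⟩ := hB'1 i hi
    nlinarith
  have hB0' : 0 ≤ ∑ i ∈ B, m i * p i :=
    sum_nonneg fun i hi => mul_nonneg (hB0 i hi).1 (hB0 i hi).2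
  linarith

end Gain

namespace Inst

def engagement_s19 (I : Inst) (i : ℕ) : ℝ := ∑ j ∈ I.artists, I.w i j

noncomputable def share (I : Inst) (S : Finset ℕ) (i : ℕ) : ℝ :=
  (∑ j ∈ S, I.w i j) / I.engagement_s19 i

def budget (g : ℝ) (I : Inst) (i : ℕ) : ℝ := min (g * I.engagement_s19 i) 1

variable {I I' : Inst} {S : Finset ℕ} {g g' : ℝ} {i : ℕ}

theorem engagement_nonneg : 0 ≤ I.engagement_s19 i := sum_nonneg fun j _ => I.w_nonneg i j

theorem share_mem_Icc (hS : S ⊆ I.artists) : I.share S i ∈ Set.Icc 0 1 :=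
  ⟨div_nonneg (sum_nonneg fun j _ => I.w_nonneg i j) engagement_nonneg,
    div_le_one_of_le₀ (sum_le_sum_of_subset_of_nonneg hS fun j _ _ => I.w_nonneg i j)
      engagement_nonneg⟩

theorem budget_mem_Icc (hg : 0 ≤ g) : I.budget g i ∈ Set.Icc 0 1 :=
  ⟨le_min (mul_nonneg hg engagement_nonneg) zero_le_one, min_le_right _ _⟩

theorem budget_mono (h : g ≤ g') : I.budget g i ≤ I.budget g' i :=
  min_le_min_right 1 (mul_le_mul_of_nonneg_right h engagement_nonneg)

section Agree

variable (hart : I.artists = I'.artists) (hw : ∀ j ∈ I.artists, I.w i j = I'.w i j)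
include hart hw

theorem engagement_eq_of_agree : I'.engagement_s19 i = I.engagement_s19 i := by
  rw [engagement_s19, engagement_s19, ← hart]
  exact sum_congr rfl fun j hj => (hw j hj).symm

theorem share_eq_of_agree (hS : S ⊆ I.artists) : I'.share S i = I.share S i := by
  rw [share, share, engagement_eq_of_agree hart hw]
  exact congrArg (· / _) (sum_congr rfl fun j hj => (hw j (hS hj)).symm)

theorem budget_eq_of_agree : I'.budget g i = I.budget g i := by
  rw [budget, budget, engagement_eq_of_agree hart hw]

end Agree

end Inst

theorem sum_scaledUserProp (γ : Inst → ℝ) (I : Inst) (S : Finset ℕ) :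
    ∑ j ∈ S, scaledUserProp γ I j = ∑ i ∈ I.users, I.budget (γ I) i * I.share S i := by
  unfold scaledUserProp
  rw [sum_comm]
  refine sum_congr rfl fun i _ => ?_
  rw [← mul_sum, ← sum_div]
  rfl

open Inst in
theorem scaledUserProp_gain_le {γ : Inst → ℝ} {I I' : Inst} (hγ : 0 ≤ γ I) (hγ' : 0 ≤ γ I')
    {A B B' : Finset ℕ} (hU : I.users = A ∪ B) (hU' : I'.users = A ∪ B')
    (hB : Disjoint A B) (hB' : Disjoint A B') (hart : I.artists = I'.artists)
    (hw : ∀ i ∈ A, ∀ j ∈ I.artists, I.w i j = I'.w i j)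
    (hbudget : ∑ i ∈ I'.users, I'.budget (γ I') i - ∑ i ∈ I.users, I.budget (γ I) i ≤ #B' - #B)
    {S : Finset ℕ} (hS : S ⊆ I.artists) :
    ∑ j ∈ S, scaledUserProp γ I' j - ∑ j ∈ S, scaledUserProp γ I j ≤ #B' := by
  have hS' : S ⊆ I'.artists := hart ▸ hS
  have hshare : ∀ i ∈ A, I'.share S i = I.share S i := fun i hi =>
    share_eq_of_agree hart (hw i hi) hS
  rw [sum_scaledUserProp, sum_scaledUserProp, hU, hU']
  rw [hU, hU'] at hbudget
  rcases le_total (γ I) (γ I') with h | h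
  · refine sum_mul_sub_sum_mul_le_card_of_le hB hB' (fun i hi => ?_)
      (fun i hi => ⟨hshare i hi, (share_mem_Icc hS).2⟩)
      (fun _ _ => ⟨(budget_mem_Icc hγ).2, share_mem_Icc hS⟩)
      (fun _ _ => ⟨(budget_mem_Icc hγ').1, (share_mem_Icc hS').2⟩) hbudget
    rw [budget_eq_of_agree hart (hw i hi)]
    exact budget_mono h
  · refine sum_mul_sub_sum_mul_le_card_of_ge hB hB' (fun i hi => ?_)
      (fun i hi => ⟨hshare i hi, (share_mem_Icc hS).1⟩)
      (fun _ _ => ⟨(budget_mem_Icc hγ).1, (share_mem_Icc hS).1⟩)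
      (fun _ _ => ⟨budget_mem_Icc hγ', (share_mem_Icc hS').2⟩)
    rw [budget_eq_of_agree hart (hw i hi)]
    exact budget_mono h

theorem stmt19 (α : ℝ) (hα : α ∈ Set.Ioc (0 : ℝ) 1)
    (γ : Inst → ℝ) (hγpos : ∀ I : Inst, 0 < γ I)
    (hγ : ∀ I : Inst,
      ∑ i ∈ I.users, min (γ I * ∑ j ∈ I.artists, I.w i j) 1 = α * I.users.card) :
    FraudProof (scaledUserProp γ) ∧ BriberyProof (scaledUserProp γ) := by
  have hγ0 : ∀ I, 0 ≤ γ I := fun I => (hγpos I).le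
  have hbudget : ∀ I : Inst, ∑ i ∈ I.users, I.budget (γ I) i = α * #I.users := hγ
  refine ⟨fun I I' _ _ N hN hU hart hw S hS => ?_, fun I I' _ _ hU hart S hS => ?_⟩
  · have hdisj : Disjoint I.users N := hU ▸ sdiff_disjoint
    have hU' : I'.users = I.users ∪ N := by rw [hU, sdiff_union_of_subset hN]
    refine scaledUserProp_gain_le (hγ0 I) (hγ0 I') (union_empty _).symm hU'
      (disjoint_empty_right _) hdisj hart hw ?_ hS
    rw [hbudget, hbudget, hU', card_union_of_disjoint hdisj, card_empty]
    push_cast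
    nlinarith [hα.2, (#N).cast_nonneg (α := ℝ)]
  · classical
    set B := I.users.filter fun i => ∃ j ∈ I.artists, I.w i j ≠ I'.w i j
    have hUB : I.users = I.users \ B ∪ B := (sdiff_union_of_subset (filter_subset _ _)).symm
    refine scaledUserProp_gain_le (B' := B) (hγ0 I) (hγ0 I') hUB (hU ▸ hUB) sdiff_disjoint
      sdiff_disjoint hart (fun i hi j hj => ?_) ?_ hS
    · by_contra hne
      exact (mem_sdiff.1 hi).2 (mem_filter.2 ⟨(mem_sdiff.1 hi).1, j, hj, hne⟩)
    · rw [hbudget, hbudget, hU, sub_self, sub_self]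
end
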